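/- If χ = (P,Q,R) is a vector field on 𝕋² with deg P, deg Q, deg R ≤ 1, then there exists c ∈ ℝ such that P = c·y, Q = −c·x and R = 0; i.e., every degree one vector field on 𝕋² is a pseudo-type-1 vector field. -/
import Mathlib

open MvPolynomial

/-- Derivative of `g` along the polynomial vector field `(P, Q, R)` in `ℝ[x,y,z]`. -/
noncomputable def vf (P Q R g : MvPolynomial (Fin 3) ℝ) : MvPolynomial (Fin 3) ℝ :=
  P * pderiv 0 g + Q * pderiv 1 g + R * pderiv 2 g

/-- The defining polynomial `F = (x²+y²-a²)² + z² - 1` of the torus `𝕋²`. -/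
noncomputable def torusF (a : ℝ) : MvPolynomial (Fin 3) ℝ :=
  (X 0 ^ 2 + X 1 ^ 2 - C (a ^ 2)) ^ 2 + X 2 ^ 2 - 1

/-- `(P, Q, R)` is a polynomial vector field on the torus `𝕋²`. -/
def IsVFOnTorus (a : ℝ) (P Q R : MvPolynomial (Fin 3) ℝ) : Prop :=
  ∃ K : MvPolynomial (Fin 3) ℝ, vf P Q R (torusF a) = K * torusF a

lemma fin3_sum_support (m : Fin 3 →₀ ℕ) : ∑ i ∈ m.support, m i = m 0 + m 1 + m 2 := by
  rw [Finset.sum_subset (Finset.subset_univ _) (fun i _ hi => Finsupp.notMem_support_iff.mp hi)]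
  simp [Fin.sum_univ_three]

lemma eq_lin_of_totalDegree_le_one (P : MvPolynomial (Fin 3) ℝ) (h : P.totalDegree ≤ 1) :
    ∃ c0 c1 c2 c3 : ℝ, P = C c0 + C c1 * X 0 + C c2 * X 1 + C c3 * X 2 := by
  refine ⟨coeff 0 P, coeff (Finsupp.single 0 1) P, coeff (Finsupp.single 1 1) P,
    coeff (Finsupp.single 2 1) P, ?_⟩
  ext m
  simp only [coeff_add, coeff_C_mul, coeff_X', coeff_C, mul_ite, mul_one, mul_zero]
  by_cases hm : 2 ≤ m 0 + m 1 + m 2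
  · have hz : coeff m P = 0 := coeff_eq_zero_of_totalDegree_lt (by
      rw [fin3_sum_support]; omega)
    rw [hz]
    have h0 : ¬ (0 = m) := by
      intro e; rw [← e] at hm; simp at hm
    have h1 : ¬ (Finsupp.single (0:Fin 3) 1 = m) := by
      intro e; rw [← e] at hm; simp [Finsupp.single_apply] at hm
    have h2 : ¬ (Finsupp.single (1:Fin 3) 1 = m) := by
      intro e; rw [← e] at hm; simp [Finsupp.single_apply] at hm
    have h3 : ¬ (Finsupp.single (2:Fin 3) 1 = m) := by
      intro e; rw [← e] at hm; simp [Finsupp.single_apply] at hm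
    simp [h0, h1, h2, h3]
  · have hcases : m = 0 ∨ m = Finsupp.single 0 1 ∨ m = Finsupp.single 1 1 ∨
        m = Finsupp.single 2 1 := by
      by_cases e0 : m 0 = 1
      · right; left
        ext j; fin_cases j <;> simp [Finsupp.single_apply] <;> omega
      by_cases e1 : m 1 = 1
      · right; right; left
        ext j; fin_cases j <;> simp [Finsupp.single_apply] <;> omega
      by_cases e2 : m 2 = 1
      · right; right; right
        ext j; fin_cases j <;> simp [Finsupp.single_apply] <;> omega
      · left
        ext j; fin_cases j <;> simp [Finsupp.single_apply] <;> omega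
    rcases hcases with rfl | rfl | rfl | rfl <;>
      simp [Finsupp.single_eq_zero, Finsupp.single_eq_single_iff, eq_comm]

lemma pd0 (a : ℝ) : pderiv 0 (torusF a) = 4 * X 0 * (X 0 ^ 2 + X 1 ^ 2 - C (a ^ 2)) := by
  simp [torusF, pderiv_pow, pderiv_X_self, pderiv_X_of_ne (by decide : (1:Fin 3) ≠ 0),
    pderiv_X_of_ne (by decide : (2:Fin 3) ≠ 0), pderiv_C]
  ring

lemma pd1 (a : ℝ) : pderiv 1 (torusF a) = 4 * X 1 * (X 0 ^ 2 + X 1 ^ 2 - C (a ^ 2)) := by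
  simp [torusF, pderiv_pow, pderiv_X_self, pderiv_X_of_ne (by decide : (0:Fin 3) ≠ 1),
    pderiv_X_of_ne (by decide : (2:Fin 3) ≠ 1), pderiv_C]
  ring

lemma pd2 (a : ℝ) : pderiv 2 (torusF a) = 2 * X 2 := by
  simp [torusF, pderiv_pow, pderiv_X_self, pderiv_X_of_ne (by decide : (0:Fin 3) ≠ 2),
    pderiv_X_of_ne (by decide : (1:Fin 3) ≠ 2), pderiv_C]

lemma key (a p0 p1 p2 p3 q0 q1 q2 q3 r0 r1 r2 r3 : ℝ) (K : MvPolynomial (Fin 3) ℝ)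
    (hK : vf (C p0 + C p1 * X 0 + C p2 * X 1 + C p3 * X 2)
             (C q0 + C q1 * X 0 + C q2 * X 1 + C q3 * X 2)
             (C r0 + C r1 * X 0 + C r2 * X 1 + C r3 * X 2) (torusF a) = K * torusF a)
    (x y z : ℝ) (h0 : (x^2+y^2-a^2)^2 + z^2 - 1 = 0) :
    4*(x^2+y^2-a^2)*(x*(p0+p1*x+p2*y+p3*z) + y*(q0+q1*x+q2*y+q3*z))
      + 2*z*(r0+r1*x+r2*y+r3*z) = 0 := by
  have hT : eval ![x,y,z] (torusF a) = 0 := by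
    simp [torusF]
    linear_combination h0
  have h := congrArg (eval ![x,y,z]) hK
  rw [vf, pd0, pd1, pd2, map_mul, hT, mul_zero] at h
  simp [torusF] at h
  linear_combination h

theorem stmt_11 (a : ℝ) (ha : 1 < a) (P Q R : MvPolynomial (Fin 3) ℝ)
    (hP : P.totalDegree ≤ 1) (hQ : Q.totalDegree ≤ 1) (hR : R.totalDegree ≤ 1)
    (hvf : IsVFOnTorus a P Q R) :
    ∃ c : ℝ, P = C c * X 1 ∧ Q = -(C c * X 0) ∧ R = 0 := by
  obtain ⟨K, hK⟩ := hvf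
  obtain ⟨p0, p1, p2, p3, hPd⟩ := eq_lin_of_totalDegree_le_one P hP
  obtain ⟨q0, q1, q2, q3, hQd⟩ := eq_lin_of_totalDegree_le_one Q hQ
  obtain ⟨r0, r1, r2, r3, hRd⟩ := eq_lin_of_totalDegree_le_one R hR
  rw [hPd, hQd, hRd] at hK
  have ha0 : (0:ℝ) < a := by linarith
  -- points with x²+y² = a², z = ±1
  have hA1 := key a p0 p1 p2 p3 q0 q1 q2 q3 r0 r1 r2 r3 K hK a 0 1 (by ring)
  have hA2 := key a p0 p1 p2 p3 q0 q1 q2 q3 r0 r1 r2 r3 K hK (-a) 0 1 (by ring)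
  have hA3 := key a p0 p1 p2 p3 q0 q1 q2 q3 r0 r1 r2 r3 K hK a 0 (-1) (by ring)
  have hA4 := key a p0 p1 p2 p3 q0 q1 q2 q3 r0 r1 r2 r3 K hK 0 a 1 (by ring)
  have hr3 : r3 = 0 := by linear_combination hA1/4 + hA3/4
  have hr1 : r1 = 0 := by
    have h : a * r1 = 0 := by linear_combination hA1/4 - hA2/4
    rcases mul_eq_zero.mp h with h | h
    · exact absurd h (by linarith)
    · exact h
  have hr0 : r0 = 0 := by linear_combination hA1/2 - a*hr1 - hr3
  have hr2 : r2 = 0 := by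
    have h : a * r2 = 0 := by linear_combination hA4/2 - hr0 - hr3
    rcases mul_eq_zero.mp h with h | h
    · exact absurd h (by linarith)
    · exact h
  -- points with x²+y² = a²+1, z = 0
  set b := Real.sqrt (a^2+1) with hbdef
  have hb2 : b^2 = a^2 + 1 := Real.sq_sqrt (by positivity)
  have hbpos : 0 < b := Real.sqrt_pos.mpr (by positivity)
  have hB1 := key a p0 p1 p2 p3 q0 q1 q2 q3 r0 r1 r2 r3 K hK b 0 0
    (by linear_combination (b^2 - a^2 + 1) * hb2)
  have hB2 := key a p0 p1 p2 p3 q0 q1 q2 q3 r0 r1 r2 r3 K hK (-b) 0 0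
    (by linear_combination (b^2 - a^2 + 1) * hb2)
  have hB3 := key a p0 p1 p2 p3 q0 q1 q2 q3 r0 r1 r2 r3 K hK 0 b 0
    (by linear_combination (b^2 - a^2 + 1) * hb2)
  have hB4 := key a p0 p1 p2 p3 q0 q1 q2 q3 r0 r1 r2 r3 K hK 0 (-b) 0
    (by linear_combination (b^2 - a^2 + 1) * hb2)
  have hbp : b * (p0 + p1*b) = 0 := by
    linear_combination hB1/4 - (b*p0 + p1*b^2) * hb2
  have hbm : b * (p0 - p1*b) = 0 := by
    linear_combination -hB2/4 - (b*p0 - p1*b^2) * hb2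
  have hbq : b * (q0 + q2*b) = 0 := by
    linear_combination hB3/4 - (b*q0 + q2*b^2) * hb2
  have hbqm : b * (q0 - q2*b) = 0 := by
    linear_combination -hB4/4 - (b*q0 - q2*b^2) * hb2
  have hbne : b ≠ 0 := ne_of_gt hbpos
  have ep : p0 + p1*b = 0 := by rcases mul_eq_zero.mp hbp with h | h; exact absurd h hbne; exact h
  have em : p0 - p1*b = 0 := by rcases mul_eq_zero.mp hbm with h | h; exact absurd h hbne; exact h
  have eq1 : q0 + q2*b = 0 := by rcases mul_eq_zero.mp hbq with h | h; exact absurd h hbne; exact h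
  have eq2 : q0 - q2*b = 0 := by rcases mul_eq_zero.mp hbqm with h | h; exact absurd h hbne; exact h
  have hp0 : p0 = 0 := by linarith
  have hp1 : p1 = 0 := by
    have h : p1 * b = 0 := by linarith
    rcases mul_eq_zero.mp h with h | h
    · exact h
    · exact absurd h hbne
  have hq0 : q0 = 0 := by linarith
  have hq2 : q2 = 0 := by
    have h : q2 * b = 0 := by linarith
    rcases mul_eq_zero.mp h with h | h
    · exact h
    · exact absurd h hbne
  -- points with x²+y² = a²+3/5, z = 4/5
  set d := Real.sqrt (a^2+3/5) with hddef
  have hd2 : d^2 = a^2 + 3/5 := Real.sq_sqrt (by positivity)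
  have hdpos : 0 < d := Real.sqrt_pos.mpr (by positivity)
  have hdne : d ≠ 0 := ne_of_gt hdpos
  have hC1 := key a p0 p1 p2 p3 q0 q1 q2 q3 r0 r1 r2 r3 K hK d 0 (4/5)
    (by linear_combination (d^2 - a^2 + 3/5) * hd2)
  have hC2 := key a p0 p1 p2 p3 q0 q1 q2 q3 r0 r1 r2 r3 K hK 0 d (4/5)
    (by linear_combination (d^2 - a^2 + 3/5) * hd2)
  rw [hp0, hp1, hr0, hr1, hr3] at hC1
  have hp3 : p3 = 0 := by
    have h : d * p3 = 0 := by
      linear_combination (25/48)*hC1 - (5/3)*(d*p3)*hd2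
    rcases mul_eq_zero.mp h with h | h
    · exact absurd h hdne
    · exact h
  rw [hq0, hq2, hr0, hr2, hr3] at hC2
  have hq3 : q3 = 0 := by
    have h : d * q3 = 0 := by
      linear_combination (25/48)*hC2 - (5/3)*(d*q3)*hd2
    rcases mul_eq_zero.mp h with h | h
    · exact absurd h hdne
    · exact h
  -- point with x = y, x²+y² = a²+1, z = 0
  set e := Real.sqrt ((a^2+1)/2) with hedef
  have he2 : e^2 = (a^2+1)/2 := Real.sq_sqrt (by positivity)
  have hepos : 0 < e := Real.sqrt_pos.mpr (by positivity)
  have hD := key a p0 p1 p2 p3 q0 q1 q2 q3 r0 r1 r2 r3 K hK e e 0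
    (by linear_combination (4*e^2 - 2*a^2 + 2) * he2)
  rw [hp0, hp1, hq0, hq2] at hD
  have hs : p2 + q1 = 0 := by
    have h : e^2 * (p2 + q1) = 0 := by
      linear_combination hD/4 - 2*(e^2*(p2+q1))*he2
    rcases mul_eq_zero.mp h with h | h
    · exact absurd h (by positivity)
    · exact h
  refine ⟨p2, ?_, ?_, ?_⟩
  · rw [hPd, hp0, hp1, hp3]
    simp
  · rw [hQd, hq0, hq2, hq3, show q1 = -p2 by linarith]
    simp
  · rw [hRd, hr0, hr1, hr2, hr3]
    simp
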